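/- arXiv:1202.1620 — 3 statements merged into one kernel-verified Lean document; each statement's English description precedes it below -/
import Mathlib

section
/- Let A be a cocomplete abelian category and X_1 → X_2 → X_3 → ⋯ a sequence of chain maps of complexes in C(A), each of which is a degree-wise split monomorphism. If every X_i is contractible (i.e., zero in the homotopy category), then the colimit colim_i X_i is contractible. -/
/-!
A degreewise split monomorphism `f : X ⟶ Y` out of a contractible complex is split as a chain
map: conjugating degreewise retractions by the contraction gives a chain retraction `r`. Then
`Y ≅ X ⊕ ker r`, so any contraction of `Y` can be corrected to one extending the given contraction
of `X`. Inductively the `Xₙ` get contractions compatible with the transition maps, and since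
colimits of complexes are computed degreewise, these descend to a contraction of the colimit.
-/

open CategoryTheory CategoryTheory.Limits

namespace Homotopy

variable {C : Type*} [Category C] [Preadditive C] {ι : Type*} {c : ComplexShape ι}

section

variable {X Y : HomologicalComplex C c}

lemma nullHomotopicMap_hom {f g : X ⟶ Y} (h : Homotopy f g) :
    nullHomotopicMap h.hom = f - g := by
  ext i
  simp [nullHomotopicMap, h.comm i]

lemma isSplitMono_of_contractible (f : X ⟶ Y) [∀ i, IsSplitMono (f.f i)]
    (s : Homotopy (𝟙 X) 0) : IsSplitMono f := by
  refine IsSplitMono.mk' ⟨nullHomotopicMap fun i j => retraction (f.f i) ≫ s.hom i j, ?_⟩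
  simp [comp_nullHomotopicMap, nullHomotopicMap_hom]

variable (f : X ⟶ Y) (r : Y ⟶ X) (hfr : f ≫ r = 𝟙 X)

/-- With `e = 𝟙 - r ≫ f`, this is the contraction `r ≫ s ≫ f + e ≫ u ≫ e` of `Y`. -/
def extendContraction (s : Homotopy (𝟙 X) 0) (u : Homotopy (𝟙 Y) 0) : Homotopy (𝟙 Y) 0 :=
  let e := 𝟙 Y - r ≫ f
  have he : e ≫ e = e := by
    simp only [e, Preadditive.comp_sub, Preadditive.sub_comp, Category.assoc, reassoc_of% hfr]
    simp
  have hsum : 𝟙 Y = r ≫ 𝟙 X ≫ f + e ≫ 𝟙 Y ≫ e := by simp [he, e]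
  (ofEq hsum).trans <| (((s.compRight f).compLeft r).add ((u.compRight e).compLeft e)).trans <|
    ofEq (by simp)

lemma comp_extendContraction_hom (s : Homotopy (𝟙 X) 0) (u : Homotopy (𝟙 Y) 0) (i j : ι) :
    f.f i ≫ (extendContraction f r hfr s u).hom i j = s.hom i j ≫ f.f j := by
  have hfr_i : f.f i ≫ r.f i = 𝟙 _ := by simpa using HomologicalComplex.congr_hom hfr i
  simp [extendContraction, Preadditive.comp_add, reassoc_of% hfr_i]

end

variable {J : Type*} [Category J] {F : J ⥤ HomologicalComplex C c}

noncomputable def ofNaturalContractions (cc : Cocone F)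
    (hcc : ∀ i, IsColimit ((HomologicalComplex.eval C c i).mapCocone cc))
    (S : ∀ j, Homotopy (𝟙 (F.obj j)) 0)
    (hS : ∀ {j j' : J} (g : j ⟶ j') (a b : ι),
      (F.map g).f a ≫ (S j').hom a b = (S j).hom a b ≫ (F.map g).f b) :
    Homotopy (𝟙 cc.pt) 0 :=
  let desc (a b : ι) : cc.pt.X a ⟶ cc.pt.X b := (hcc a).desc
    { pt := cc.pt.X b
      ι :=
        { app := fun j => (S j).hom a b ≫ (cc.ι.app j).f b
          naturality := fun j j' g => by
            have h : (F.map g).f a ≫ (S j').hom a b ≫ (cc.ι.app j').f b =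
                (S j).hom a b ≫ (cc.ι.app j).f b := by
              rw [reassoc_of% hS g a b, ← HomologicalComplex.comp_f, cc.w g]
            exact h.trans (Category.comp_id _).symm } }
  have ι_desc (j : J) (a b : ι) :
      (cc.ι.app j).f a ≫ desc a b = (S j).hom a b ≫ (cc.ι.app j).f b :=
    (hcc a).fac _ j
  have hnull : 𝟙 cc.pt = nullHomotopicMap desc :=
    (HomologicalComplex.isColimitOfEval _ _ hcc).hom_ext fun j => by
      simp [comp_nullHomotopicMap, ι_desc, ← nullHomotopicMap_comp, nullHomotopicMap_hom]
  (ofEq hnull).trans <| nullHomotopy desc fun a b hab =>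
    (hcc a).hom_ext fun j => by
      change (cc.ι.app j).f a ≫ desc a b = (cc.ι.app j).f a ≫ 0
      rw [ι_desc, (S j).zero a b hab, zero_comp, comp_zero]

section Sequence

variable (F : ℕ ⥤ HomologicalComplex C c)
  (hsplit : ∀ (n : ℕ) (i : ι), IsSplitMono ((F.map (homOfLE (Nat.le_succ n))).f i))
  (hcontr : ∀ n : ℕ, Nonempty (Homotopy (𝟙 (F.obj n)) 0))

noncomputable def compatibleContractions : ∀ n : ℕ, Homotopy (𝟙 (F.obj n)) 0
  | 0 => (hcontr 0).some
  | n + 1 =>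
    let f := F.map (homOfLE (Nat.le_succ n))
    have := hsplit n
    have := isSplitMono_of_contractible f (compatibleContractions n)
    extendContraction f (retraction f) (IsSplitMono.id f) (compatibleContractions n)
      (hcontr (n + 1)).some

lemma map_comp_compatibleContractions_hom {n m : ℕ} (g : n ⟶ m) (a b : ι) :
    (F.map g).f a ≫ (compatibleContractions F hsplit hcontr m).hom a b =
      (compatibleContractions F hsplit hcontr n).hom a b ≫ (F.map g).f b :=
  (NatTrans.ofSequence (F := F ⋙ HomologicalComplex.eval C c a)
    (G := F ⋙ HomologicalComplex.eval C c b)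
    (fun n => (compatibleContractions F hsplit hcontr n).hom a b)
    (fun n => by
      rw [compatibleContractions]
      exact comp_extendContraction_hom _ _ _ _ _ a b)).naturality g

end Sequence

end Homotopy

/-- Let `A` be a cocomplete abelian category and `X₁ → X₂ → X₃ → ⋯` a
sequence of chain maps of complexes in `C(A)`, each of which is a degree-wise split
monomorphism.  If every `Xᵢ` is contractible (zero in the homotopy category), then the
colimit `colim Xᵢ` is contractible. -/
theorem colimit_contractible_of_degreewise_split_mono
    (A : Type*) [Category A] [Abelian A] [HasColimits A]
    (F : ℕ ⥤ ChainComplex A ℤ)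
    (hsplit : ∀ (n : ℕ) (i : ℤ), IsSplitMono ((F.map (homOfLE (Nat.le_succ n))).f i))
    (hcontr : ∀ n : ℕ, Nonempty (Homotopy (𝟙 (F.obj n)) 0)) :
    Nonempty (Homotopy (𝟙 (colimit F)) 0) := by
  have hdegreewise (i : ℤ) :=
    isColimitOfPreserves (HomologicalComplex.eval A _ i) (colimit.isColimit F)
  exact ⟨Homotopy.ofNaturalContractions (colimit.cocone F) hdegreewise
    (Homotopy.compatibleContractions F hsplit hcontr)
    (Homotopy.map_comp_compatibleContractions_hom F hsplit hcontr)⟩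
end

section
/- Let T' be a compactly generated triangulated category and T a localizing subcategory such that the inclusion T → T' has a right adjoint. Then for any object X of T', there exists a distinguished triangle X' → X → X'' → ΣX' with X' ∈ T and X'' ∈ T^⊥, and the right adjoint sends X to X'. -/
open CategoryTheory CategoryTheory.Limits Pretriangulated

universe v u u'

/-- An object `C` of a preadditive category is compact if every map from `C` to a small
coproduct factors through a finite subcoproduct. -/
def IsCompactObj {T : Type u} [Category.{v} T] [Preadditive T] (C : T) : Prop :=
  ∀ (J : Type v) (Xs : J → T) [HasCoproduct Xs] (f : C ⟶ ∐ Xs),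
    ∃ (s : Finset J) (g : ∀ j : J, C ⟶ Xs j), f = ∑ j ∈ s, g j ≫ Sigma.ι Xs j

/-!
Since `ι` is fully faithful, postcomposition with the counit `ε : ι G X ⟶ X` is a bijection
`Hom(ι W, ι G X) ≃ Hom(W, G X) ≃ Hom(ι W, X)`. Complete `ε` to a distinguished triangle
`ι G X ⟶ X ⟶ Z ⟶ (ι G X)⟦1⟧`. Injectivity for the object `(ι W)⟦-1⟧`, which again lies in the
essential image of `ι`, kills `Hom(ι W, Z) ⟶ Hom(ι W, (ι G X)⟦1⟧)`; by exactness every map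
`ι W ⟶ Z` then factors through `X ⟶ Z`, and surjectivity makes it factor through `ε`, so it
vanishes.
-/

namespace CategoryTheory

lemma Iso.bijective_comp_iff {C : Type*} [Category C] {X X' A B : C} (e : X ≅ X') (f : A ⟶ B) :
    Function.Bijective (fun ψ : X ⟶ A => ψ ≫ f) ↔
      Function.Bijective (fun ψ : X' ⟶ A => ψ ≫ f) := by
  have h : (fun ψ : X' ⟶ A => ψ ≫ f) =
      e.homFromEquiv ∘ (fun ψ : X ⟶ A => ψ ≫ f) ∘ e.homFromEquiv.symm := by
    funext ψ
    simp [Iso.homFromEquiv]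
  rw [h, Equiv.comp_bijective, Equiv.bijective_comp]

namespace Adjunction

variable {C D : Type*} [Category C] [Category D] {F : C ⥤ D} {G : D ⥤ C} (adj : F ⊣ G)

lemma bijective_comp_counit_app [F.Full] (W : C) (Y : D) :
    Function.Bijective (fun ψ : F.obj W ⟶ F.obj (G.obj Y) => ψ ≫ adj.counit.app Y) := by
  refine ⟨fun ψ₁ ψ₂ h => ?_, fun ψ => ⟨F.map (adj.homEquiv W Y ψ), ?_⟩⟩
  · obtain ⟨p₁, rfl⟩ := F.map_surjective ψ₁
    obtain ⟨p₂, rfl⟩ := F.map_surjective ψ₂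
    have hp : p₁ = p₂ :=
      (adj.homEquiv W Y).symm.injective (by simpa [adj.homEquiv_counit] using h)
    exact congrArg F.map hp
  · exact (adj.homEquiv_counit ..).symm.trans ((adj.homEquiv W Y).symm_apply_apply ψ)

lemma bijective_comp_counit_app_of_mem_essImage [F.Full] {X : D} (hX : F.essImage X) (Y : D) :
    Function.Bijective (fun ψ : X ⟶ F.obj (G.obj Y) => ψ ≫ adj.counit.app Y) := by
  obtain ⟨W, ⟨e⟩⟩ := hX
  exact (e.bijective_comp_iff _).1 (adj.bijective_comp_counit_app W Y)

end Adjunction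

lemma eq_zero_of_comp_shiftFunctor_map_eq_zero {C : Type*} [Category C] [HasZeroMorphisms C]
    [HasShift C ℤ] {X A B : C} {f : A ⟶ B}
    (hX : ∀ g : X⟦(-1 : ℤ)⟧ ⟶ A, g ≫ f = 0 → g = 0)
    (χ : X ⟶ A⟦(1 : ℤ)⟧) (hχ : χ ≫ f⟦(1 : ℤ)⟧' = 0) : χ = 0 := by
  let e := (shiftFunctorCompIsoId C (-1 : ℤ) 1 (neg_add_cancel 1)).app X
  obtain ⟨g, hg⟩ := (shiftFunctor C (1 : ℤ)).map_surjective (e.hom ≫ χ)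
  have hgf : g ≫ f = 0 := by
    rw [← (shiftFunctor C (1 : ℤ)).map_eq_zero_iff, Functor.map_comp, hg, Category.assoc, hχ,
      comp_zero]
  rw [← cancel_epi e.hom, ← hg, hX g hgf, Functor.map_zero, comp_zero]

section

-- Qualified because inside `Triangle`, `shiftFunctor` would mean `Triangle.shiftFunctor`.
variable {C : Type*} [Category C] [Preadditive C] [HasZeroObject C] [HasShift C ℤ]
  [∀ n : ℤ, (CategoryTheory.shiftFunctor C n).Additive] [Pretriangulated C]
  {T : Triangle C} (hT : T ∈ distTriang C)
include hT

lemma Pretriangulated.Triangle.comp_mor₃_eq_zero {X : C}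
    (hX : ∀ g : X⟦(-1 : ℤ)⟧ ⟶ T.obj₁, g ≫ T.mor₁ = 0 → g = 0) (f : X ⟶ T.obj₃) :
    f ≫ T.mor₃ = 0 :=
  eq_zero_of_comp_shiftFunctor_map_eq_zero hX _ (by simp [comp_distTriang_mor_zero₃₁ _ hT])

lemma Pretriangulated.Triangle.rightOrthogonal_obj₃ (P : ObjectProperty C)
    [P.IsStableUnderShift ℤ]
    (hP : ∀ X, P X → Function.Bijective (fun g : X ⟶ T.obj₁ => g ≫ T.mor₁)) :
    P.rightOrthogonal T.obj₃ := by
  intro X f hX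
  have hinj (g : X⟦(-1 : ℤ)⟧ ⟶ T.obj₁) (hg : g ≫ T.mor₁ = 0) : g = 0 :=
    (hP _ (P.le_shift _ _ hX)).1 (hg.trans (zero_comp).symm)
  obtain ⟨g, rfl⟩ := coyoneda_exact₃ T hT f (comp_mor₃_eq_zero hT hinj f)
  obtain ⟨g', rfl⟩ := (hP X hX).2 g
  simp [comp_distTriang_mor_zero₁₂ T hT]

end

end CategoryTheory

/-- Let `T'` be a compactly generated triangulated category and `T` a
localizing (triangulated, closed under coproducts) subcategory, embedded via the fully
faithful triangulated coproduct-preserving inclusion `ι : T ⥤ T'`, such that `ι` has a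
right adjoint `G`.  Then for any object `X` of `T'` there exists a distinguished triangle
`X' → X → X'' → ΣX'` with `X' ∈ T` (namely `X' = ι(G(X))`, the first map being the counit)
and `X'' ∈ T^⊥`; in particular the right adjoint sends `X` to `X'`. -/
theorem bousfield_localization_triangle
    (T : Type u) (T' : Type u')
    [Category.{v} T] [Category.{v} T']
    [Preadditive T] [HasZeroObject T] [HasShift T ℤ]
    [∀ n : ℤ, (shiftFunctor T n).Additive] [Pretriangulated T]
    [Preadditive T'] [HasZeroObject T'] [HasShift T' ℤ]
    [∀ n : ℤ, (shiftFunctor T' n).Additive] [Pretriangulated T']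
    [HasCoproducts.{v} T']
    -- `T'` is compactly generated
    (S : Set T') (hScpt : ∀ C ∈ S, IsCompactObj C)
    (hSgen : ∀ X : T', (∀ C ∈ S, ∀ n : ℤ, ∀ f : C ⟶ X⟦n⟧, f = 0) → IsZero X)
    -- the inclusion of the localizing subcategory
    (ι : T ⥤ T') [ι.Full] [ι.Faithful] [ι.CommShift ℤ] [ι.IsTriangulated]
    (hloc : ∀ (J : Type v), PreservesColimitsOfShape (Discrete J) ι)
    (G : T' ⥤ T) (adj : ι ⊣ G) :
    ∀ X : T', ∃ (Z : T') (g : X ⟶ Z) (h : Z ⟶ (ι.obj (G.obj X))⟦(1 : ℤ)⟧),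
      Triangle.mk (adj.counit.app X) g h ∈ (distTriang T') ∧
      ∀ (W : T) (φ : ι.obj W ⟶ Z), φ = 0 := by
  intro X
  obtain ⟨Z, g, h, hT⟩ := distinguished_cocone_triangle (adj.counit.app X)
  refine ⟨Z, g, h, hT, fun W φ => ?_⟩
  have hZ : ι.essImage.rightOrthogonal Z :=
    Triangle.rightOrthogonal_obj₃ hT ι.essImage
      (fun _ hY => adj.bijective_comp_counit_app_of_mem_essImage hY X)
  exact hZ φ (ι.obj_mem_essImage W)
end

section
/- Let R be a ring and P an object of K(Prj C(R)) (a complex of projective complexes of R-modules) concentrated in non-negative rows, i.e., P^j = 0 for j < 0. Then P is contractible if and only if each row complex P^j ∈ K(Prj R) is contractible, for all j ∈ ℤ. -/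
/-!
Every column of `P` is a projective object of `C(R)`, hence a retract of a contractible mapping
cone, hence contractible; fix contractions `k` of the columns. A contraction of `P` is the same as
a family of row contractions `s_j` commuting with the vertical differential `d_v`, and these are
built by induction on `j`, starting from `s_j = 0` below row `0`. Given `s_{j-1}` and any
contraction `t` of row `j`, the defect `e = s_{j-1} d_v - d_v t` (composition in diagrammatic
order) anticommutes with `d_h` and is killed by `d_v`; hence `s_j = t + k e + [k, d_h] e t` is
again a contraction of row `j`, and `d_v k + k d_v = 1` makes it commute with `d_v`.
-/

open CategoryTheory CategoryTheory.Limits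

noncomputable section

variable {C : Type*} [Category* C] [Preadditive C]

def Homotopy.idZeroOfEpi {ι : Type*} {c : ComplexShape ι} {B X : HomologicalComplex C c}
    (π : B ⟶ X) [Epi π] [Projective X] (h : Homotopy (𝟙 B) 0) : Homotopy (𝟙 X) 0 :=
  (Homotopy.ofEq (by simp)).trans (((h.compRight π).compLeft (Projective.factorThru (𝟙 X) π)).trans
    (.ofEq (by simp)))

namespace CochainComplex

lemma mappingCone.epi_triangle_mor₃ [HasBinaryBiproducts C] {K L : CochainComplex C ℤ}
    (φ : K ⟶ L) : Epi (mappingCone.triangle φ).mor₃ := by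
  let m : mappingCone φ ⟶ K⟦(1 : ℤ)⟧ := (triangle φ).mor₃
  suffices ∀ n, IsSplitEpi (m.f n) from HomologicalComplex.epi_of_epi_f m fun n => inferInstance
  intro n
  have h : (inl φ).v (n + 1) n (by omega) ≫ m.f n = -(K.shiftFunctorObjXIso 1 n (n + 1) rfl).inv :=
    inl_v_triangle_mor₃_f φ (n + 1) n _
  exact ⟨⟨-((K.shiftFunctorObjXIso 1 n (n + 1) rfl).hom ≫ (inl φ).v (n + 1) n (by omega)),
    by rw [Preadditive.neg_comp, Category.assoc, h, Preadditive.comp_neg, neg_neg, Iso.hom_inv_id]⟩⟩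

def homotopyIdZeroOfProjective [HasBinaryBiproducts C] (X : CochainComplex C ℤ)
    [Projective X] : Homotopy (𝟙 X) 0 :=
  have := epi_comp' (mappingCone.epi_triangle_mor₃ (𝟙 (X⟦(-1 : ℤ)⟧)))
    (inferInstance : Epi ((shiftEquiv _ (1 : ℤ)).counitIso.app X).hom)
  Homotopy.idZeroOfEpi ((mappingCone.triangle (𝟙 (X⟦(-1 : ℤ)⟧))).mor₃ ≫
    ((shiftEquiv _ (1 : ℤ)).counitIso.app X).hom) (mappingCone.homotopyToZeroOfId _)

end CochainComplex

lemma Homotopy.id_eq_d_comp_add_comp_d {K : CochainComplex C ℤ} (h : Homotopy (𝟙 K) 0) {p i n : ℤ}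
    (hp : p + 1 = i) (hn : i + 1 = n) :
    𝟙 (K.X i) = K.d i n ≫ h.hom n i + h.hom i p ≫ K.d p i := by
  have := h.comm i
  rw [dNext_eq _ (show (ComplexShape.up ℤ).Rel i n from hn),
    prevD_eq _ (show (ComplexShape.up ℤ).Rel p i from hp)] at this
  simpa using this

def Homotopy.ofIdEq {K : CochainComplex C ℤ} (h : ∀ i i', K.X i ⟶ K.X i')
    (zero : ∀ i i', ¬ i' + 1 = i → h i i' = 0)
    (id_eq : ∀ i, 𝟙 (K.X i) = K.d i (i + 1) ≫ h (i + 1) i + h i (i - 1) ≫ K.d (i - 1) i) :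
    Homotopy (𝟙 K) 0 where
  hom := h
  zero := zero
  comm i := by
    rw [dNext_eq _ (show (ComplexShape.up ℤ).Rel i (i + 1) from rfl),
      prevD_eq _ (show (ComplexShape.up ℤ).Rel (i - 1) i by simp)]
    simpa using id_eq i

namespace Bicomplex

abbrev row (j : ℤ) : CochainComplex (CochainComplex C ℤ) ℤ ⥤ CochainComplex C ℤ :=
  (HomologicalComplex.eval C (ComplexShape.up ℤ) j).mapHomologicalComplex (ComplexShape.up ℤ)

def homotopyOfRows {P Q : CochainComplex (CochainComplex C ℤ) ℤ} {φ ψ : P ⟶ Q}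
    (u : ∀ j, Homotopy ((row j).map φ) ((row j).map ψ))
    (hu : ∀ j j' i i', j + 1 = j' →
      (P.X i).d j j' ≫ (u j').hom i i' = (u j).hom i i' ≫ (Q.X i').d j j') :
    Homotopy φ ψ where
  hom i i' := { f j := (u j).hom i i', comm' j j' h := (hu j j' i i' h).symm }
  zero i i' h := by ext j; exact (u j).zero i i' h
  comm i := by ext j; exact (u j).comm i

section Construction

variable {P : CochainComplex (CochainComplex C ℤ) ℤ}

/-- `h.hom i i'` with its type written in terms of `P`, so that it composes with the components
of `P` without unfolding `row`. -/
def rowHom {j : ℤ} (h : Homotopy (𝟙 ((row j).obj P)) 0) (i i' : ℤ) :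
    (P.X i).X j ⟶ (P.X i').X j :=
  h.hom i i'

lemma rowHom_eq_zero {j : ℤ} (h : Homotopy (𝟙 ((row j).obj P)) 0) {i i' : ℤ}
    (hi : ¬ i' + 1 = i) : rowHom h i i' = 0 :=
  h.zero i i' hi

lemma id_eq_rowHom {j : ℤ} (h : Homotopy (𝟙 ((row j).obj P)) 0) {p i n : ℤ}
    (hp : p + 1 = i) (hn : i + 1 = n) :
    𝟙 ((P.X i).X j) = (P.d i n).f j ≫ rowHom h n i + rowHom h i p ≫ (P.d p i).f j :=
  Homotopy.id_eq_d_comp_add_comp_d h hp hn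

variable (k : ∀ i, Homotopy (𝟙 (P.X i)) 0) (t : ∀ j, Homotopy (𝟙 ((row j).obj P)) 0)

def commutator (j j' i i' : ℤ) : (P.X i).X j ⟶ (P.X i').X j' :=
  (k i).hom j j' ≫ (P.d i i').f j' - (P.d i i').f j ≫ (k i').hom j j'

def defect {j₀ : ℤ} (v : Homotopy (𝟙 ((row j₀).obj P)) 0) (j₁ i i' : ℤ) :
    (P.X i).X j₀ ⟶ (P.X i').X j₁ :=
  rowHom v i i' ≫ (P.X i').d j₀ j₁ - (P.X i).d j₀ j₁ ≫ rowHom (t j₁) i i'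

variable {t} in
lemma defect_eq_zero {j₀ : ℤ} (v : Homotopy (𝟙 ((row j₀).obj P)) 0) (j₁ : ℤ) {i i' : ℤ}
    (h : ¬ i' + 1 = i) : defect t v j₁ i i' = 0 := by
  simp [defect, rowHom_eq_zero _ h]

lemma d_comp_defect {j₀ : ℤ} (v : Homotopy (𝟙 ((row j₀).obj P)) 0) (j₁ : ℤ) {p i n : ℤ}
    (hp : p + 1 = i) (hn : i + 1 = n) :
    (P.d i n).f j₀ ≫ defect t v j₁ n i = -(defect t v j₁ i p ≫ (P.d p i).f j₁) := by
  have hv : ((P.d i n).f j₀ ≫ rowHom v n i + rowHom v i p ≫ (P.d p i).f j₀) ≫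
      (P.X i).d j₀ j₁ = (P.X i).d j₀ j₁ := by
    rw [← id_eq_rowHom v hp hn, Category.id_comp]
  have ht : (P.X i).d j₀ j₁ ≫ ((P.d i n).f j₁ ≫ rowHom (t j₁) n i +
      rowHom (t j₁) i p ≫ (P.d p i).f j₁) = (P.X i).d j₀ j₁ := by
    rw [← id_eq_rowHom (t j₁) hp hn, Category.comp_id]
  simp only [defect, Preadditive.add_comp, Preadditive.comp_add, Preadditive.sub_comp,
    Preadditive.comp_sub, Category.assoc] at hv ht ⊢
  rw [reassoc_of% ((P.d i n).comm j₀ j₁), ← (P.d p i).comm j₀ j₁]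
  linear_combination (norm := abel) hv - ht

lemma d_comp_commutator (j j' i i' i'' : ℤ) :
    (P.d i i').f j ≫ commutator k j j' i' i'' = -(commutator k j j' i i' ≫ (P.d i' i'').f j') := by
  have h₁ : (P.d i i').f j ≫ (P.d i' i'').f j = 0 := by
    rw [← HomologicalComplex.comp_f, P.d_comp_d, HomologicalComplex.zero_f]
  have h₂ : (P.d i i').f j' ≫ (P.d i' i'').f j' = 0 := by
    rw [← HomologicalComplex.comp_f, P.d_comp_d, HomologicalComplex.zero_f]
  simp only [commutator, Preadditive.comp_sub, Preadditive.sub_comp, Category.assoc, h₂,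
    reassoc_of% h₁, comp_zero, zero_comp]
  abel

variable {t} in
lemma dv_comp_defect {j₁ : ℤ} (v : Homotopy (𝟙 ((row j₁).obj P)) 0) (j₂ : ℤ) {j₀ a b : ℤ}
    (w : (P.X a).X j₀ ⟶ (P.X b).X j₀)
    (hw : (P.X a).d j₀ j₁ ≫ rowHom v a b = w ≫ (P.X b).d j₀ j₁) :
    (P.X a).d j₀ j₁ ≫ defect t v j₂ a b = 0 := by
  simp only [defect, Preadditive.comp_sub, reassoc_of% hw, HomologicalComplex.d_comp_d,
    HomologicalComplex.d_comp_d_assoc, comp_zero, zero_comp, sub_zero]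

lemma dv_comp_commutator {j₀ j₁ j₂ : ℤ} (h₀ : j₀ + 1 = j₁) (h₁ : j₁ + 1 = j₂) (i i' : ℤ) :
    (P.X i).d j₁ j₂ ≫ commutator k j₂ j₁ i i' = -(commutator k j₁ j₀ i i' ≫ (P.X i').d j₀ j₁) := by
  have hk : ((P.X i).d j₁ j₂ ≫ (k i).hom j₂ j₁ + (k i).hom j₁ j₀ ≫ (P.X i).d j₀ j₁) ≫
      (P.d i i').f j₁ = (P.d i i').f j₁ := by
    rw [← Homotopy.id_eq_d_comp_add_comp_d (k i) h₀ h₁, Category.id_comp]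
  have hk' : (P.d i i').f j₁ ≫ ((P.X i').d j₁ j₂ ≫ (k i').hom j₂ j₁ +
      (k i').hom j₁ j₀ ≫ (P.X i').d j₀ j₁) = (P.d i i').f j₁ := by
    rw [← Homotopy.id_eq_d_comp_add_comp_d (k i') h₀ h₁, Category.comp_id]
  simp only [commutator, Preadditive.add_comp, Preadditive.comp_add, Preadditive.sub_comp,
    Preadditive.comp_sub, Category.assoc] at hk hk' ⊢
  rw [← reassoc_of% ((P.d i i').comm j₁ j₂), (P.d i i').comm j₀ j₁]
  linear_combination (norm := abel) hk - hk'

def stepHom (j : ℤ) (v : Homotopy (𝟙 ((row (j - 1)).obj P)) 0) (i i' : ℤ) :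
    (P.X i).X j ⟶ (P.X i').X j :=
  rowHom (t j) i i' + (k i).hom j (j - 1) ≫ defect t v j i i' +
    commutator k j (j - 1) i (i + 1) ≫ defect t v j (i + 1) i ≫ rowHom (t j) i i'

lemma stepHom_eq_zero (j : ℤ) (v : Homotopy (𝟙 ((row (j - 1)).obj P)) 0) {i i' : ℤ}
    (h : ¬ i' + 1 = i) : stepHom k t j v i i' = 0 := by
  simp [stepHom, rowHom_eq_zero _ h, defect_eq_zero _ _ h]

lemma id_eq_stepHom (j : ℤ) (v : Homotopy (𝟙 ((row (j - 1)).obj P)) 0) (i : ℤ) :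
    𝟙 ((P.X i).X j) = (P.d i (i + 1)).f j ≫ stepHom k t j v (i + 1) i +
      stepHom k t j v i (i - 1) ≫ (P.d (i - 1) i).f j := by
  have ht := id_eq_rowHom (t j) (show i - 1 + 1 = i by omega) rfl
  have hte := congrArg (commutator k j (j - 1) i (i + 1) ≫ defect t v j (i + 1) i ≫ ·) ht
  simp only [Category.comp_id, Preadditive.comp_add] at hte
  have hce : commutator k j (j - 1) i (i + 1) ≫ defect t v j (i + 1) i =
      (k i).hom j (j - 1) ≫ (P.d i (i + 1)).f (j - 1) ≫ defect t v j (i + 1) i -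
        (P.d i (i + 1)).f j ≫ (k (i + 1)).hom j (j - 1) ≫ defect t v j (i + 1) i := by
    simp only [commutator, Preadditive.sub_comp, Category.assoc]
  have he := d_comp_defect t v j (show i - 1 + 1 = i by omega) rfl
  have he' := d_comp_defect t v j (show i + 1 = i + 1 from rfl) rfl
  have hc := d_comp_commutator k j (j - 1) i (i + 1) (i + 1 + 1)
  simp only [stepHom, Preadditive.comp_add, Preadditive.add_comp, Category.assoc]
  rw [reassoc_of% hc]
  simp only [Preadditive.neg_comp, Category.assoc]
  rw [reassoc_of% he', neg_eq_iff_eq_neg.mp he.symm]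
  simp only [Preadditive.comp_neg, Preadditive.neg_comp, Category.assoc, neg_neg]
  linear_combination (norm := abel) ht + hte - hce

def rowStep (j : ℤ) (v : Homotopy (𝟙 ((row (j - 1)).obj P)) 0) :
    Homotopy (𝟙 ((row j).obj P)) 0 :=
  Homotopy.ofIdEq (stepHom k t j v) (fun _ _ => stepHom_eq_zero k t j v) (id_eq_stepHom k t j v)

lemma dv_comp_rowStep (j : ℤ) (v : Homotopy (𝟙 ((row (j - 1)).obj P)) 0) {j' : ℤ}
    (hj' : j' + 1 = j - 1) (w : ∀ a b, (P.X a).X j' ⟶ (P.X b).X j')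
    (hw : ∀ a b, (P.X a).d j' (j - 1) ≫ rowHom v a b = w a b ≫ (P.X b).d j' (j - 1))
    (i i' : ℤ) :
    (P.X i).d (j - 1) j ≫ rowHom (rowStep k t j v) i i' = rowHom v i i' ≫ (P.X i').d (j - 1) j := by
  have hk := congrArg (· ≫ defect t v j i i')
    (Homotopy.id_eq_d_comp_add_comp_d (k i) hj' (show j - 1 + 1 = j by omega))
  simp only [Preadditive.add_comp, Category.assoc, Category.id_comp,
    dv_comp_defect v j (w i i') (hw i i'), comp_zero, add_zero] at hk
  have hc := dv_comp_commutator k hj' (show j - 1 + 1 = j by omega) i (i + 1)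
  change (P.X i).d (j - 1) j ≫ stepHom k t j v i i' = _
  have he := dv_comp_defect (t := t) v j (w (i + 1) i) (hw (i + 1) i)
  simp only [stepHom, Preadditive.comp_add, reassoc_of% hc, Preadditive.neg_comp, Category.assoc,
    reassoc_of% he, zero_comp, comp_zero, neg_zero, add_zero]
  rw [← hk, defect]
  abel

variable (hrows : ∀ j : ℤ, j < 0 → ∀ i : ℤ, IsZero ((P.X i).X j))

def rowContraction (j : ℤ) : Homotopy (𝟙 ((row j).obj P)) 0 :=
  if hj : j < 0 then .ofEq (by ext i; exact (hrows j hj i).eq_of_src _ _)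
  else rowStep k t j (rowContraction (j - 1))
termination_by (j + 1).toNat
decreasing_by omega

lemma dv_comp_rowContraction (j i i' : ℤ) :
    (P.X i).d (j - 1) j ≫ rowHom (rowContraction k t hrows j) i i' =
      rowHom (rowContraction k t hrows (j - 1)) i i' ≫ (P.X i').d (j - 1) j := by
  by_cases hj : j < 0
  · exact (hrows (j - 1) (by omega) i).eq_of_src _ _
  · rw [rowContraction.eq_1 k t hrows j, dif_neg hj]
    exact dv_comp_rowStep k t j _ (by omega) _ (dv_comp_rowContraction (j - 1)) i i'
termination_by (j + 1).toNat
decreasing_by omega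

def contraction : Homotopy (𝟙 P) 0 :=
  homotopyOfRows (rowContraction k t hrows) fun j j' i i' h => by
    obtain rfl : j = j' - 1 := by omega
    exact dv_comp_rowContraction k t hrows j' i i'

end Construction

end Bicomplex

end

/-- Let `R` be a ring and `P` an object of `K(Prj C(R))`, i.e. a complex of
projective complexes of `R`-modules (a bicomplex whose columns `P_i` are projective
objects of `C(R)`), concentrated in non-negative rows: `P^j = 0` for `j < 0`.  Then `P`
is contractible if and only if each row complex `P^j ∈ K(Prj R)` is contractible, for all
`j ∈ ℤ`. -/
theorem contractible_iff_rows_contractible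
    (R : Type) [Ring R]
    (P : CochainComplex (CochainComplex (ModuleCat R) ℤ) ℤ)
    (hproj : ∀ i : ℤ, Projective (P.X i))
    (hrows : ∀ j : ℤ, j < 0 → ∀ i : ℤ, IsZero ((P.X i).X j)) :
    Nonempty (Homotopy (𝟙 P) 0) ↔
      ∀ j : ℤ, Nonempty (Homotopy
        (𝟙 (((HomologicalComplex.eval (ModuleCat R) (ComplexShape.up ℤ) j).mapHomologicalComplex
          (ComplexShape.up ℤ)).obj P)) 0) := by
  refine ⟨fun ⟨H⟩ j => ⟨(HomologicalComplex.eval _ _ j).mapHomotopy H⟩, fun h => ?_⟩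
  have k (i : ℤ) : Homotopy (𝟙 (P.X i)) 0 :=
    have := hproj i
    CochainComplex.homotopyIdZeroOfProjective (P.X i)
  exact ⟨Bicomplex.contraction k (fun j => (h j).some) hrows⟩
end
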